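/- Let ψ, φ ∈ L(𝕄_D) with ψ a positive non-transient map and φ a strictly positive map satisfying c(φ) ≤ r for some r ∈ (0,1). Then for any A,B ∈ 𝕊_D, |ln‖ψ(φ·A)‖ − ln‖ψ(φ·B)‖| ≤ c(φ) · (2/r) ln(1/(1−r)). -/

import Mathlib

open MeasureTheory Matrix Filter
open scoped BigOperators ENNReal NNReal ComplexOrder

noncomputable section

abbrev Mat (D : ℕ) := Matrix (Fin D) (Fin D) ℂ

instance {D : ℕ} : MeasurableSpace (Mat D) := MeasurableSpace.pi

def traceNorm {D : ℕ} (A : Mat D) : ℝ :=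
  (((Matrix.posSemidef_conjTranspose_mul_self A).1.eigenvectorUnitary.1 *
      Matrix.diagonal (((↑) : ℝ → ℂ) ∘ (Real.sqrt ·) ∘ (Matrix.posSemidef_conjTranspose_mul_self A).1.eigenvalues) *
      (star (Matrix.posSemidef_conjTranspose_mul_self A).1.eigenvectorUnitary : Mat D)).trace).re

def SD (D : ℕ) : Set (Mat D) := {A | A.PosSemidef ∧ A.trace = 1}
def SDo (D : ℕ) : Set (Mat D) := {A | A.PosDef ∧ A.trace = 1}

abbrev MapM (D : ℕ) := Mat D →ₗ[ℂ] Mat D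

def IsPositiveMap {D : ℕ} (φ : MapM D) : Prop := ∀ A : Mat D, A.PosSemidef → (φ A).PosSemidef
def IsStrictlyPositiveMap {D : ℕ} (φ : MapM D) : Prop := ∀ A ∈ SD D, (φ A).PosDef

def opNorm {D : ℕ} (φ : MapM D) : ℝ :=
  sSup {x | ∃ A : Mat D, traceNorm A = 1 ∧ x = traceNorm (φ A)}

def vval {D : ℕ} (φ : MapM D) : ℝ := sInf {x | ∃ A ∈ SD D, x = traceNorm (φ A)}

def mcoef {D : ℕ} (A B : Mat D) : ℝ := sSup {l : ℝ | (A - (l : ℂ) • B).PosSemidef}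

def dmet {D : ℕ} (A B : Mat D) : ℝ :=
  (1 - mcoef A B * mcoef B A) / (1 + mcoef A B * mcoef B A)

def NonDestructive {D : ℕ} (φ : MapM D) : Prop := ∀ A ∈ SD D, φ A ≠ 0

def hsAdjoint {D : ℕ} (φ : MapM D) : MapM D where
  toFun A := Matrix.of fun i j => ((φ (Matrix.single i j 1))ᴴ * A).trace
  map_add' A B := by
    ext i j
    simp [Matrix.mul_add]
  map_smul' c A := by
    ext i j
    simp [Matrix.mul_smul]

def NonTransient {D : ℕ} (φ : MapM D) : Prop := NonDestructive (hsAdjoint φ)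

def projAct {D : ℕ} (φ : MapM D) (X : Mat D) : Mat D := ((φ X).trace)⁻¹ • φ X

def ccoef {D : ℕ} (φ : MapM D) : ℝ :=
  sSup {x | ∃ A ∈ SD D, ∃ B ∈ SD D, x = dmet (projAct φ A) (projAct φ B)}

def IsRightPF {D : ℕ} (φ : MapM D) (R : Mat D) : Prop :=
  R ∈ SD D ∧ ∃ Λ : ℝ, 0 < Λ ∧ φ R = (Λ : ℂ) • R ∧
    spectralRadius ℂ (φ : Module.End ℂ (Mat D)) = ENNReal.ofReal Λ

def IsLeftPF {D : ℕ} (φ : MapM D) (L : Mat D) : Prop :=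
  L ∈ SD D ∧ ∃ Λ : ℝ, 0 < Λ ∧ hsAdjoint φ L = (Λ : ℂ) • L ∧
    spectralRadius ℂ (φ : Module.End ℂ (Mat D)) = ENNReal.ofReal Λ

/-- `prodFrom φ0 θ a n ω = φ_n ∘ ⋯ ∘ φ_{a+1}` (identity if `n ≤ a`), where `φ_k = φ0 ∘ θ^k`. -/
def prodFrom {D : ℕ} {Ω : Type*} (φ0 : Ω → MapM D) (θ : Ω → Ω) (a : ℕ) : ℕ → Ω → MapM D
  | 0, _ => LinearMap.id
  | n+1, ω => if n+1 ≤ a then LinearMap.id else (φ0 (θ^[n+1] ω)) ∘ₗ prodFrom φ0 θ a n ω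

/-- `Φ^{(n)} = φ_n ∘ ⋯ ∘ φ_1`. -/
def PhiSeq {D : ℕ} {Ω : Type*} (φ0 : Ω → MapM D) (θ : Ω → Ω) (n : ℕ) (ω : Ω) : MapM D :=
  prodFrom φ0 θ 0 n ω

/-- Assumption 1 : the sequence `Φ^{(n)}` is almost surely eventually strictly positive. -/
def Assumption1 {D : ℕ} {Ω : Type*} [MeasurableSpace Ω] (μ : Measure Ω)
    (φ0 : Ω → MapM D) (θ : Ω → Ω) : Prop :=
  ∀ᵐ ω ∂μ, ∃ n : ℕ, 1 ≤ n ∧ ∀ k : ℕ, IsStrictlyPositiveMap (PhiSeq φ0 θ (n + k) ω)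

/-- iteration of `θ` (for `k ≥ 0`) resp. its inverse `θ'` (for `k < 0`). -/
def zIter {Ω : Type*} (θ θ' : Ω → Ω) : ℤ → Ω → Ω
  | Int.ofNat n, ω => θ^[n] ω
  | Int.negSucc n, ω => θ'^[n+1] ω

/-- `Ψ^{(n)} = ψ_n ∘ ⋯ ∘ ψ_1` where `ψ_k = φ_{-k}*`. -/
def PsiSeq {D : ℕ} {Ω : Type*} (φ0 : Ω → MapM D) (θ' : Ω → Ω) : ℕ → Ω → MapM D
  | 0, _ => LinearMap.id
  | n+1, ω => hsAdjoint (φ0 (θ'^[n+1] ω)) ∘ₗ PsiSeq φ0 θ' n ω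

/-- `Φ^{(-m)} = φ_{-1} ∘ ⋯ ∘ φ_{-m}` (indexed by `m ≥ 1`). -/
def PhiNeg {D : ℕ} {Ω : Type*} (φ0 : Ω → MapM D) (θ' : Ω → Ω) : ℕ → Ω → MapM D
  | 0, _ => LinearMap.id
  | m+1, ω => PhiNeg φ0 θ' m ω ∘ₗ (φ0 (θ'^[m+1] ω))

/-- `compDown f k j = f_k ∘ f_{k+1} ∘ ⋯ ∘ f_{k+j}`. -/
def compDown {D : ℕ} {Ω : Type*} (f : ℕ → Ω → MapM D) (k : ℕ) : ℕ → Ω → MapM D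
  | 0, ω => f k ω
  | j+1, ω => compDown f k j ω ∘ₗ f (k+j+1) ω

/-- the σ-algebra generated by `(φ_k)_{k ≥ n}`. -/
def sigmaUp {D : ℕ} {Ω : Type*} (φ0 : Ω → MapM D) (θ θ' : Ω → Ω) (n : ℤ) :
    MeasurableSpace Ω :=
  ⨆ (k : ℤ) (_ : n ≤ k) (A : Mat D),
    MeasurableSpace.comap (fun ω => φ0 (zIter θ θ' k ω) A) inferInstance

/-- the σ-algebra generated by `(φ_j)_{j ≤ k}`. -/
def sigmaLow {D : ℕ} {Ω : Type*} (φ0 : Ω → MapM D) (θ θ' : Ω → Ω) (k : ℤ) :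
    MeasurableSpace Ω :=
  ⨆ (j : ℤ) (_ : j ≤ k) (A : Mat D),
    MeasurableSpace.comap (fun ω => φ0 (zIter θ θ' j ω) A) inferInstance

/-- Assumption 2 : `E[|ln‖φ₀*‖|] < ∞` and `E[|ln v(φ₀*)|] < ∞`. -/
def Assumption2 {D : ℕ} {Ω : Type*} [MeasurableSpace Ω] (μ : Measure Ω)
    (φ0 : Ω → MapM D) : Prop :=
  Integrable (fun ω => Real.log (opNorm (hsAdjoint (φ0 ω)))) μ ∧
  Integrable (fun ω => Real.log (vval (hsAdjoint (φ0 ω)))) μ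

/-- Assumption 2_p : `ln‖φ₀*‖` and `ln v(φ₀*)` are in `L^p`. -/
def Assumption2p {D : ℕ} {Ω : Type*} [MeasurableSpace Ω] (μ : Measure Ω)
    (φ0 : Ω → MapM D) (p : ℝ) : Prop :=
  MemLp (fun ω => Real.log (opNorm (hsAdjoint (φ0 ω)))) (ENNReal.ofReal p) μ ∧
  MemLp (fun ω => Real.log (vval (hsAdjoint (φ0 ω)))) (ENNReal.ofReal p) μ


/-!
For `A, B ∈ 𝕊_D` the points `P = φ·A` and `Q = φ·B` are positive definite of trace one, so
`m = m(P,Q)` and `m' = m(Q,P)` lie in `(0,1]` and are attained (the positive semidefinite cone is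
closed). A positive map is monotone for the Loewner order, hence `m Tr ψ(Q) ≤ Tr ψ(P)` and
`m' Tr ψ(P) ≤ Tr ψ(Q)`, and `‖ψ(X)‖ = Tr ψ(X)` for `X ≥ 0`. These traces are positive: if
`Tr ψ(P) = 0` then `ψ(P) = 0`, so `ψ(1) = 0` as `P ≥ ε·1`, so `ψ` vanishes on the positive cone,
which spans `𝕄_D`, contradicting non-transience. Therefore
`|ln‖ψ(P)‖ - ln‖ψ(Q)‖| ≤ -ln(m m') = ln((1 + d)/(1 - d))` with `d = d(P,Q) ≤ c(φ) ≤ r`, and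
concavity of `ln` gives `ln((1 + d)/(1 - d)) ≤ d · (2/r) ln(1/(1 - r))` on `[0, r]`.
-/

open scoped MatrixOrder

lemma CStarAlgebra.exists_pos_smul_le {A : Type*} [CStarAlgebra A] [PartialOrder A]
    [StarOrderedRing A] [Nontrivial A] {a b : A} (ha : IsStrictlyPositive a)
    (hb : IsSelfAdjoint b) : ∃ ε : ℝ, 0 < ε ∧ ε • b ≤ a := by
  obtain ⟨r, hr, hra⟩ := (CFC.exists_pos_algebraMap_le_iff ha.isSelfAdjoint).2
    fun x hx ↦ ha.spectrum_pos hx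
  have hN : 0 < ‖b‖ + 1 := by positivity
  refine ⟨r / (‖b‖ + 1), by positivity, ?_⟩
  calc (r / (‖b‖ + 1)) • b ≤ (r / (‖b‖ + 1)) • algebraMap ℝ A ‖b‖ :=
        smul_le_smul_of_nonneg_left hb.le_algebraMap_norm_self (by positivity)
    _ ≤ algebraMap ℝ A r := by
        rw [Algebra.smul_def, ← map_mul]
        refine algebraMap_mono A ?_
        rw [div_mul_eq_mul_div, div_le_iff₀ hN]
        nlinarith [norm_nonneg b]
    _ ≤ a := hra

section Matrix

variable {n : Type*} [Fintype n]

lemma Matrix.nonempty_of_trace_ne_zero {R : Type*} [AddCommMonoid R] {A : Matrix n n R}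
    (h : A.trace ≠ 0) : Nonempty n := by
  by_contra hn
  rw [not_nonempty_iff] at hn
  exact h (by simp [Matrix.trace])

variable [DecidableEq n]

open scoped Matrix.Norms.L2Operator in
lemma Matrix.isClosed_setOf_posSemidef : IsClosed {A : Matrix n n ℂ | A.PosSemidef} := by
  simpa [Set.Ici, Matrix.nonneg_iff_posSemidef] using isClosed_Ici (a := (0 : Matrix n n ℂ))

open scoped Matrix.Norms.L2Operator in
lemma Matrix.span_setOf_posSemidef :
    Submodule.span ℂ {A : Matrix n n ℂ | A.PosSemidef} = ⊤ := by
  simpa [Matrix.nonneg_iff_posSemidef] using CStarAlgebra.span_nonneg (A := Matrix n n ℂ)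

open scoped Matrix.Norms.L2Operator in
lemma Matrix.PosDef.exists_pos_smul_le [Nonempty n] {P Q : Matrix n n ℂ} (hP : P.PosDef)
    (hQ : Q.IsHermitian) : ∃ ε : ℝ, 0 < ε ∧ ε • Q ≤ P :=
  CStarAlgebra.exists_pos_smul_le (Matrix.isStrictlyPositive_iff_posDef.mpr hP) hQ

end Matrix

variable {D : ℕ}

section mcoef

variable {P Q : Mat D}

lemma isClosed_setOf_sub_smul_posSemidef (P Q : Mat D) :
    IsClosed {l : ℝ | (P - (l : ℂ) • Q).PosSemidef} :=
  Matrix.isClosed_setOf_posSemidef.preimage (by fun_prop)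

lemma le_re_trace_of_sub_smul_posSemidef (hQ : Q.trace = 1) {l : ℝ}
    (h : (P - (l : ℂ) • Q).PosSemidef) : l ≤ P.trace.re := by
  have h0 := (Complex.nonneg_iff.mp h.trace_nonneg).1
  rw [Matrix.trace_sub, Matrix.trace_smul, hQ, smul_eq_mul, mul_one, Complex.sub_re,
    Complex.ofReal_re] at h0
  linarith

lemma bddAbove_setOf_sub_smul_posSemidef (P : Mat D) (hQ : Q.trace = 1) :
    BddAbove {l : ℝ | (P - (l : ℂ) • Q).PosSemidef} :=
  ⟨P.trace.re, fun _ ↦ le_re_trace_of_sub_smul_posSemidef hQ⟩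

lemma zero_mem_setOf_sub_smul_posSemidef (hP : P.PosSemidef) :
    (0 : ℝ) ∈ {l : ℝ | (P - (l : ℂ) • Q).PosSemidef} := by
  simpa using hP

lemma sub_mcoef_smul_posSemidef (hP : P.PosSemidef) (hQ : Q.trace = 1) :
    (P - (mcoef P Q : ℂ) • Q).PosSemidef :=
  (isClosed_setOf_sub_smul_posSemidef P Q).csSup_mem ⟨0, zero_mem_setOf_sub_smul_posSemidef hP⟩
    (bddAbove_setOf_sub_smul_posSemidef P hQ)

lemma mcoef_nonneg (hP : P.PosSemidef) (hQ : Q.trace = 1) : 0 ≤ mcoef P Q :=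
  le_csSup (bddAbove_setOf_sub_smul_posSemidef P hQ) (zero_mem_setOf_sub_smul_posSemidef hP)

lemma mcoef_le_one (hP : P.PosSemidef) (hPt : P.trace = 1) (hQ : Q.trace = 1) :
    mcoef P Q ≤ 1 :=
  csSup_le ⟨0, zero_mem_setOf_sub_smul_posSemidef hP⟩ fun _ hl ↦ by
    simpa [hPt] using le_re_trace_of_sub_smul_posSemidef hQ hl

lemma mcoef_pos (hP : P.PosDef) (hQ : Q.PosSemidef) (hQt : Q.trace = 1) : 0 < mcoef P Q := by
  have : Nonempty (Fin D) := Matrix.nonempty_of_trace_ne_zero (hQt ▸ one_ne_zero)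
  obtain ⟨ε, hε, hεQ⟩ := hP.exists_pos_smul_le hQ.isHermitian
  refine hε.trans_le (le_csSup (bddAbove_setOf_sub_smul_posSemidef P hQt) ?_)
  rwa [Set.mem_ofPred_eq, Complex.coe_smul, ← Matrix.le_iff]

lemma dmet_le_one (hP : P ∈ SD D) (hQ : Q ∈ SD D) : dmet P Q ≤ 1 := by
  have := mul_nonneg (mcoef_nonneg hP.1 hQ.2) (mcoef_nonneg hQ.1 hP.2)
  rw [dmet, div_le_one (by linarith)]
  linarith

end mcoef

lemma SDo_subset_SD : SDo D ⊆ SD D := fun _ hP ↦ ⟨hP.1.posSemidef, hP.2⟩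

lemma projAct_mem_SDo {φ : MapM D} (hφ : IsStrictlyPositiveMap φ) {A : Mat D} (hA : A ∈ SD D) :
    projAct φ A ∈ SDo D := by
  have : Nonempty (Fin D) := Matrix.nonempty_of_trace_ne_zero (hA.2 ▸ one_ne_zero)
  have htr := (hφ A hA).trace_pos
  exact ⟨(hφ A hA).smul (inv_pos.mpr htr),
    by rw [projAct, Matrix.trace_smul, smul_eq_mul, inv_mul_cancel₀ htr.ne']⟩

lemma dmet_projAct_le_ccoef {φ : MapM D} (hφ : IsStrictlyPositiveMap φ) {A B : Mat D}
    (hA : A ∈ SD D) (hB : B ∈ SD D) : dmet (projAct φ A) (projAct φ B) ≤ ccoef φ := by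
  refine le_csSup ⟨1, ?_⟩ ⟨A, hA, B, hB, rfl⟩
  rintro _ ⟨A', hA', B', hB', rfl⟩
  exact dmet_le_one (SDo_subset_SD (projAct_mem_SDo hφ hA'))
    (SDo_subset_SD (projAct_mem_SDo hφ hB'))

section PositiveMap

variable {ψ : MapM D}

lemma IsPositiveMap.monotone (hψ : IsPositiveMap ψ) : Monotone ψ := fun A B h ↦ by
  rw [Matrix.le_iff, ← map_sub]
  exact hψ _ h

lemma IsPositiveMap.smul_re_trace_le (hψ : IsPositiveMap ψ) {P Q : Mat D} {l : ℝ}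
    (h : (P - (l : ℂ) • Q).PosSemidef) : l * (ψ Q).trace.re ≤ (ψ P).trace.re := by
  have h0 := (Complex.nonneg_iff.mp (hψ _ h).trace_nonneg).1
  rw [map_sub, map_smul, Matrix.trace_sub, Matrix.trace_smul, smul_eq_mul, Complex.sub_re,
    Complex.re_ofReal_mul] at h0
  linarith

open scoped Matrix.Norms.L2Operator in
lemma IsPositiveMap.eq_zero_of_map_one_eq_zero (hψ : IsPositiveMap ψ) (h1 : ψ 1 = 0) :
    ψ = 0 := by
  refine LinearMap.ext_on Matrix.span_setOf_posSemidef fun Q hQ ↦ le_antisymm ?_ ?_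
  · calc ψ Q ≤ ψ (algebraMap ℝ (Mat D) ‖Q‖) :=
          hψ.monotone hQ.isHermitian.isSelfAdjoint.le_algebraMap_norm_self
      _ = 0 := by rw [Algebra.algebraMap_eq_smul_one, LinearMap.map_smul_of_tower, h1, smul_zero]
  · exact Matrix.nonneg_iff_posSemidef.mpr (hψ Q hQ)

lemma NonTransient.ne_zero (hψ : NonTransient ψ) {A : Mat D} (hA : A ∈ SD D) : ψ ≠ 0 := by
  rintro rfl
  exact hψ A hA (by ext; simp [hsAdjoint])

lemma IsPositiveMap.re_trace_pos (hψ : IsPositiveMap ψ) (hψnt : NonTransient ψ) {P : Mat D}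
    (hP : P ∈ SDo D) : 0 < (ψ P).trace.re := by
  have : Nonempty (Fin D) := Matrix.nonempty_of_trace_ne_zero (hP.2 ▸ one_ne_zero)
  have htr := Complex.nonneg_iff.mp (hψ P hP.1.posSemidef).trace_nonneg
  refine htr.1.lt_of_ne fun h ↦ ?_
  have hψP : ψ P = 0 :=
    (hψ P hP.1.posSemidef).trace_eq_zero_iff.mp (Complex.ext h.symm htr.2.symm)
  obtain ⟨ε, hε, hεP⟩ := hP.1.exists_pos_smul_le Matrix.isHermitian_one
  have hψ1 : ψ 1 = 0 := by
    have := hψ.monotone hεP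
    rw [LinearMap.map_smul_of_tower, hψP] at this
    exact le_antisymm ((smul_nonpos_iff_nonpos_of_pos_left hε).mp this)
      (Matrix.nonneg_iff_posSemidef.mpr (hψ 1 Matrix.PosSemidef.one))
  exact hψnt.ne_zero (SDo_subset_SD hP) (hψ.eq_zero_of_map_one_eq_zero hψ1)

end PositiveMap

lemma traceNorm_of_posSemidef {A : Mat D} (hA : A.PosSemidef) : traceNorm A = A.trace.re := by
  have hAA := Matrix.posSemidef_conjTranspose_mul_self A
  have hsqrt : CFC.sqrt (Aᴴ * A) = A :=
    (CFC.sqrt_eq_iff _ _ (Matrix.nonneg_iff_posSemidef.mpr hAA)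
      (Matrix.nonneg_iff_posSemidef.mpr hA)).mpr (by rw [hA.1.eq])
  have hcfc : cfc Real.sqrt (Aᴴ * A) = A := by
    rw [← cfcₙ_eq_cfc (hf := Real.continuous_sqrt.continuousOn) (hf0 := Real.sqrt_zero),
      ← CFC.sqrt_eq_real_sqrt _ (Matrix.nonneg_iff_posSemidef.mpr hAA), hsqrt]
  rw [hAA.1.cfc_eq, Matrix.IsHermitian.cfc, Unitary.conjStarAlgAut_apply] at hcfc
  exact congrArg (fun M : Mat D ↦ M.trace.re) hcfc

namespace Real

lemma abs_log_sub_log_le_neg_log_mul {a b m m' : ℝ} (ha : 0 < a) (hb : 0 < b) (hm : 0 < m)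
    (hm' : 0 < m') (hm1 : m ≤ 1) (hm1' : m' ≤ 1) (hab : m * b ≤ a) (hba : m' * a ≤ b) :
    |log a - log b| ≤ -log (m * m') := by
  have h₁ := log_le_log (by positivity) hab
  have h₂ := log_le_log (by positivity) hba
  rw [log_mul hm.ne' hb.ne'] at h₁
  rw [log_mul hm'.ne' ha.ne'] at h₂
  have h₃ := log_nonpos hm.le hm1
  have h₄ := log_nonpos hm'.le hm1'
  rw [abs_le, log_mul hm.ne' hm'.ne']
  constructor <;> linarith

lemma neg_log_eq_log_one_add_sub_log_one_sub {x : ℝ} (hx : 0 < x) :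
    -log x = log (1 + (1 - x) / (1 + x)) - log (1 - (1 - x) / (1 + x)) := by
  have h₁ : 1 + (1 - x) / (1 + x) = 2 / (1 + x) := by field_simp; ring
  have h₂ : 1 - (1 - x) / (1 + x) = 2 * x / (1 + x) := by field_simp; ring
  rw [h₁, h₂, ← log_div (by positivity) (by positivity), ← log_inv]
  congr 1
  field_simp

lemma log_one_add_sub_log_one_sub_le {d r : ℝ} (hd : 0 ≤ d) (hdr : d ≤ r) (hr : r < 1) :
    log (1 + d) - log (1 - d) ≤ d * ((2 / r) * log (1 / (1 - r))) := by
  rcases hd.eq_or_lt with rfl | hd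
  · simp
  have hr0 : 0 < r := hd.trans_le hdr
  set t := d / r
  have ht : t * r = d := div_mul_cancel₀ d hr0.ne'
  have hC : r ≤ log (1 / (1 - r)) := by
    rw [one_div, log_inv]
    linarith [log_le_sub_one_of_pos (by linarith : 0 < 1 - r)]
  have hplus : log (1 + d) ≤ t * log (1 / (1 - r)) := by
    linarith [log_le_sub_one_of_pos (by linarith : 0 < 1 + d),
      mul_le_mul_of_nonneg_left hC (div_nonneg hd.le hr0.le)]
  -- concavity of `log` on `[1 - r, 1]`, at the point `1 - d = (1 - t) • 1 + t • (1 - r)`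
  have hminus : t * log (1 - r) ≤ log (1 - d) := by
    have hconc := strictConcaveOn_log_Ioi.concaveOn.2 (Set.mem_Ioi.mpr one_pos)
      (Set.mem_Ioi.mpr (by linarith : (0 : ℝ) < 1 - r))
      (sub_nonneg.mpr ((div_le_one hr0).mpr hdr) : (0 : ℝ) ≤ 1 - t) (div_nonneg hd.le hr0.le)
      (sub_add_cancel 1 t)
    have harg : (1 - t) • (1 : ℝ) + t • (1 - r) = 1 - d := by
      simp only [smul_eq_mul]
      linear_combination -ht
    rwa [harg, log_one, smul_zero, zero_add, smul_eq_mul] at hconc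
  have hlog : log (1 / (1 - r)) = -log (1 - r) := by rw [one_div, log_inv]
  calc log (1 + d) - log (1 - d) ≤ 2 * t * log (1 / (1 - r)) := by rw [hlog] at hplus ⊢; linarith
    _ = d * ((2 / r) * log (1 / (1 - r))) := by rw [← ht]; field_simp

end Real

theorem stmt18 {D : ℕ} (ψ φ : MapM D)
    (hψpos : IsPositiveMap ψ) (hψnt : NonTransient ψ)
    (hφ : IsStrictlyPositiveMap φ)
    (r : ℝ) (hr : r ∈ Set.Ioo (0:ℝ) 1) (hc : ccoef φ ≤ r) :
    ∀ A ∈ SD D, ∀ B ∈ SD D,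
      |Real.log (traceNorm (ψ (projAct φ A))) - Real.log (traceNorm (ψ (projAct φ B)))| ≤
        ccoef φ * ((2 / r) * Real.log (1 / (1 - r))) := by
  intro A hA B hB
  have hP := projAct_mem_SDo hφ hA
  have hQ := projAct_mem_SDo hφ hB
  set P := projAct φ A
  set Q := projAct φ B
  have hm := mcoef_pos hP.1 hQ.1.posSemidef hQ.2
  have hm' := mcoef_pos hQ.1 hP.1.posSemidef hP.2
  have hm1 := mcoef_le_one hP.1.posSemidef hP.2 hQ.2
  have hm1' := mcoef_le_one hQ.1.posSemidef hQ.2 hP.2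
  have hd : 0 ≤ dmet P Q :=
    div_nonneg (sub_nonneg.mpr (mul_le_one₀ hm1 hm'.le hm1')) (by positivity)
  have hdc : dmet P Q ≤ ccoef φ := dmet_projAct_le_ccoef hφ hA hB
  have hC : 0 ≤ (2 / r) * Real.log (1 / (1 - r)) :=
    mul_nonneg (div_nonneg zero_le_two hr.1.le)
      (Real.log_nonneg (one_le_one_div (sub_pos.mpr hr.2) (by linarith [hr.1])))
  rw [traceNorm_of_posSemidef (hψpos P hP.1.posSemidef),
    traceNorm_of_posSemidef (hψpos Q hQ.1.posSemidef)]
  calc _ ≤ -Real.log (mcoef P Q * mcoef Q P) :=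
        Real.abs_log_sub_log_le_neg_log_mul (hψpos.re_trace_pos hψnt hP)
          (hψpos.re_trace_pos hψnt hQ) hm hm' hm1 hm1'
          (hψpos.smul_re_trace_le (sub_mcoef_smul_posSemidef hP.1.posSemidef hQ.2))
          (hψpos.smul_re_trace_le (sub_mcoef_smul_posSemidef hQ.1.posSemidef hP.2))
    _ = Real.log (1 + dmet P Q) - Real.log (1 - dmet P Q) :=
        Real.neg_log_eq_log_one_add_sub_log_one_sub (mul_pos hm hm')
    _ ≤ dmet P Q * ((2 / r) * Real.log (1 / (1 - r))) :=
        Real.log_one_add_sub_log_one_sub_le hd (hdc.trans hc) hr.2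
    _ ≤ ccoef φ * ((2 / r) * Real.log (1 / (1 - r))) := mul_le_mul_of_nonneg_right hdc hC
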